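/- arXiv:1505.07237 — 9 statements merged into one kernel-verified Lean document; each statement's English description precedes it below -/
import Mathlib

section
/- Let X ∈ GL_m(k) and Y ∈ GL_n(k). The map A ↦ XAY on k^{m×n} preserves the bilinear form ⟨A,B⟩ = trace(AB^T) (i.e. trace(XAY(XBY)^T) = trace(AB^T) for all A,B) if and only if there exists a ∈ k^× with X^T X = a·I_m and Y Y^T = a^{-1}·I_n. -/
/-!
Moving `X` and `Y` across the trace turns the form `⟨XAY, XBY⟩` into `⟨(XᵀX) A (YYᵀ), B⟩`.
Since the trace form is nondegenerate, `A ↦ XAY` preserves it iff `(XᵀX) A (YYᵀ) = A` for every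
`A`. Testing this on the matrix units `Eᵢⱼ` gives `(XᵀX)ᵢ'ᵢ (YYᵀ)ⱼⱼ' = δᵢ'ᵢ δⱼⱼ'`, which forces
`XᵀX = a • 1` and `YYᵀ = a⁻¹ • 1` for the unit `a = (XᵀX)ᵢᵢ`.
-/

open Matrix

namespace Matrix

variable {m n R : Type*} [Fintype m] [Fintype n]

theorem trace_mul_mul_transpose_mul_mul [CommRing R] (X : Matrix m m R) (Y : Matrix n n R)
    (A B : Matrix m n R) :
    trace (X * A * Y * (X * B * Y)ᵀ) = trace (Xᵀ * X * A * (Y * Yᵀ) * Bᵀ) := by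
  simp only [transpose_mul, ← Matrix.mul_assoc]
  rw [trace_mul_comm]
  simp only [← Matrix.mul_assoc]

theorem forall_trace_mul_transpose_eq_iff [NonAssocSemiring R] (C D : Matrix m n R) :
    (∀ B : Matrix m n R, trace (C * Bᵀ) = trace (D * Bᵀ)) ↔ C = D := by
  rw [ext_iff_trace_mul_right]
  exact ⟨fun h B => by simpa using h Bᵀ, fun h B => h Bᵀ⟩

theorem mul_single_one_mul_apply [DecidableEq m] [DecidableEq n] [CommSemiring R]
    (M : Matrix m m R) (N : Matrix n n R) (i i' : m) (j j' : n) :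
    (M * single i j (1 : R) * N) i' j' = M i' i * N j j' := by
  simp [mul_apply, single, ite_and]

theorem forall_mul_mul_eq_self_iff [DecidableEq m] [DecidableEq n] [Nonempty m] [Nonempty n]
    [CommRing R] (M : Matrix m m R) (N : Matrix n n R) :
    (∀ A : Matrix m n R, M * A * N = A) ↔
      ∃ a : Rˣ, M = (a : R) • (1 : Matrix m m R) ∧ N = ((a⁻¹ : Rˣ) : R) • (1 : Matrix n n R) := by
  constructor
  · intro h
    have hMN (i i' : m) (j j' : n) :
        M i' i * N j j' = (1 : Matrix m m R) i' i * (1 : Matrix n n R) j j' := by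
      rw [← mul_single_one_mul_apply, h, single_apply, one_apply, one_apply]
      by_cases hi : i = i' <;> by_cases hj : j = j' <;> simp [hi, hj, eq_comm]
    obtain ⟨i₀⟩ := ‹Nonempty m›
    obtain ⟨j₀⟩ := ‹Nonempty n›
    have hab : M i₀ i₀ * N j₀ j₀ = 1 := by simpa using hMN i₀ i₀ j₀ j₀
    refine ⟨Units.mkOfMulEqOne _ _ hab, ?_, ?_⟩
    · ext p q
      calc M p q = M p q * N j₀ j₀ * M i₀ i₀ := by rw [mul_assoc, mul_comm (N _ _), hab, mul_one]
        _ = _ := by simp [hMN, mul_comm]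
    · ext p q
      have hinv : ((Units.mkOfMulEqOne _ _ hab)⁻¹ : Rˣ) = N j₀ j₀ := by
        rw [← Units.mul_eq_one_iff_inv_eq]
        exact hab
      calc N p q = M i₀ i₀ * N p q * N j₀ j₀ := by rw [mul_right_comm, hab, one_mul]
        _ = _ := by simp [hMN, hinv, mul_comm]
  · rintro ⟨a, rfl, rfl⟩ A
    simp [smul_smul]

end Matrix

theorem trace_form_preserving_iff_general
    {k : Type*} [Field k] {m n : ℕ} (hm : 0 < m) (hn : 0 < n)
    (X : Matrix (Fin m) (Fin m) k) (Y : Matrix (Fin n) (Fin n) k) :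
    (∀ A B : Matrix (Fin m) (Fin n) k,
      Matrix.trace (X * A * Y * (X * B * Y)ᵀ) = Matrix.trace (A * Bᵀ)) ↔
    ∃ a : kˣ, Xᵀ * X = (a : k) • (1 : Matrix (Fin m) (Fin m) k) ∧
      Y * Yᵀ = ((a⁻¹ : kˣ) : k) • (1 : Matrix (Fin n) (Fin n) k) := by
  have : Nonempty (Fin m) := ⟨⟨0, hm⟩⟩
  have : Nonempty (Fin n) := ⟨⟨0, hn⟩⟩
  simp only [trace_mul_mul_transpose_mul_mul, forall_trace_mul_transpose_eq_iff]
  exact forall_mul_mul_eq_self_iff _ _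

theorem trace_form_preserving_iff
    {k : Type*} [Field k] {m n : ℕ} (hm : 0 < m) (hn : 0 < n)
    (X : Matrix (Fin m) (Fin m) k) (Y : Matrix (Fin n) (Fin n) k)
    (hX : IsUnit X.det) (hY : IsUnit Y.det) :
    (∀ A B : Matrix (Fin m) (Fin n) k,
      Matrix.trace (X * A * Y * (X * B * Y)ᵀ) = Matrix.trace (A * Bᵀ)) ↔
    ∃ a : kˣ, Xᵀ * X = (a : k) • (1 : Matrix (Fin m) (Fin m) k) ∧
      Y * Yᵀ = ((a⁻¹ : kˣ) : k) • (1 : Matrix (Fin n) (Fin n) k) :=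
  trace_form_preserving_iff_general hm hn X Y
end

section
/- Over a field of characteristic 2, there exists no self-dual linear code C ≤ k^{m×n} (C = C^⊥ under ⟨A,B⟩ = trace(AB^T)) whose minimum rank distance is at least 2. -/
open Matrix

/-- The dual of a rank-metric code with respect to `⟨A,B⟩ = trace (A * Bᵀ)`. -/
def dualSet {k : Type*} [Field k] {m n : ℕ}
    (C : Set (Matrix (Fin m) (Fin n) k)) : Set (Matrix (Fin m) (Fin n) k) :=
  {X | ∀ A ∈ C, Matrix.trace (A * Xᵀ) = 0}

theorem no_selfDual_code_minDist_ge_two_char_two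
    {k : Type*} [Field k] [CharP k 2] {m n : ℕ} (hm : 0 < m) (hn : 0 < n) :
    ¬ ∃ C : Submodule k (Matrix (Fin m) (Fin n) k),
      (C : Set (Matrix (Fin m) (Fin n) k)) =
        dualSet (C : Set (Matrix (Fin m) (Fin n) k)) ∧
      ∀ A ∈ C, A ≠ 0 → 2 ≤ A.rank := by
  rintro ⟨C, hC, hd⟩
  -- every element of C has entry-sum zero
  have hsum : ∀ A ∈ C, ∑ i, ∑ j, A i j = 0 := by
    intro A hA
    have hA' : A ∈ dualSet (C : Set (Matrix (Fin m) (Fin n) k)) := by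
      rw [← hC]; exact hA
    have h0 : Matrix.trace (A * Aᵀ) = 0 := hA' A hA
    have htr : Matrix.trace (A * Aᵀ) = ∑ i, ∑ j, A i j * A i j := by
      simp [Matrix.trace, Matrix.mul_apply, Matrix.diag]
    have hsq : (∑ i, ∑ j, A i j) ^ 2 = 0 := by
      rw [sum_pow_char]
      simp_rw [sum_pow_char, sq]
      rw [← htr, h0]
    exact (pow_eq_zero_iff (by norm_num : (2:ℕ) ≠ 0)).mp hsq
  -- the all-ones matrix is in the dual, hence in C
  set J : Matrix (Fin m) (Fin n) k := Matrix.of (fun _ _ => 1) with hJ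
  have hJC : J ∈ C := by
    have : J ∈ dualSet (C : Set (Matrix (Fin m) (Fin n) k)) := by
      intro A hA
      have htr : Matrix.trace (A * Jᵀ) = ∑ i, ∑ j, A i j := by
        simp [Matrix.trace, Matrix.mul_apply, Matrix.diag, hJ]
      rw [htr]
      exact hsum A hA
    rw [← hC] at this
    exact this
  have hJne : J ≠ 0 := by
    intro h
    have := congrFun (congrFun h ⟨0, hm⟩) ⟨0, hn⟩
    simp [hJ] at this
  have hrank : J.rank ≤ 1 := by
    have hfac : J = (Matrix.of (fun (_ : Fin m) (_ : Fin 1) => (1 : k))) *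
        (Matrix.of (fun (_ : Fin 1) (_ : Fin n) => (1 : k))) := by
      ext i j
      simp [hJ, Matrix.mul_apply]
    rw [hfac]
    calc (Matrix.of (fun (_ : Fin m) (_ : Fin 1) => (1 : k)) *
        Matrix.of (fun (_ : Fin 1) (_ : Fin n) => (1 : k))).rank
        ≤ (Matrix.of (fun (_ : Fin 1) (_ : Fin n) => (1 : k))).rank :=
          Matrix.rank_mul_le_right _ _
      _ ≤ Fintype.card (Fin 1) := Matrix.rank_le_card_height _
      _ = 1 := by simp
  have := hd J hJC hJne
  omega
end

section
/- Let k = F_q with q odd, and let C ≤ k^{2×2} be a 2-dimensional linear code spanned by A = [[1,0],[a,b]] and B = [[0,1],[c,d]]. Then C is self-dual with respect to ⟨X,Y⟩ = trace(XY^T) if and only if a² + b² = -1 and (c,d) ∈ {(-b,a),(b,-a)}. -/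
open Matrix

lemma mem_dual_span_iff {k : Type*} [Field k] {m n : ℕ}
    (A B X : Matrix (Fin m) (Fin n) k) :
    X ∈ dualSet ((Submodule.span k {A, B} : Submodule k (Matrix (Fin m) (Fin n) k)) :
        Set (Matrix (Fin m) (Fin n) k)) ↔
      Matrix.trace (A * Xᵀ) = 0 ∧ Matrix.trace (B * Xᵀ) = 0 := by
  constructor
  · intro h
    exact ⟨h A (Submodule.subset_span (by simp)), h B (Submodule.subset_span (by simp))⟩
  · rintro ⟨h1, h2⟩ C hC
    let φ : Matrix (Fin m) (Fin n) k →ₗ[k] k :=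
      { toFun := fun C => Matrix.trace (C * Xᵀ)
        map_add' := fun M N => by
          show Matrix.trace ((M + N) * Xᵀ) = _
          rw [Matrix.add_mul, Matrix.trace_add]
        map_smul' := fun r M => by
          show Matrix.trace ((r • M) * Xᵀ) = r • Matrix.trace (M * Xᵀ)
          rw [Matrix.smul_mul, Matrix.trace_smul] }
    have hle : Submodule.span k {A, B} ≤ LinearMap.ker φ := by
      rw [Submodule.span_le]
      intro C hC
      rcases hC with rfl | hC
      · exact h1
      · rw [Set.mem_singleton_iff] at hC; subst hC; exact h2
    exact hle hC

theorem selfDual_two_by_two_iff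
    {k : Type*} [Field k] [Fintype k] (hq : ringChar k ≠ 2) (a b c d : k) :
    ((Submodule.span k {!![(1:k),0;a,b], !![0,1;c,d]} :
        Submodule k (Matrix (Fin 2) (Fin 2) k)) : Set (Matrix (Fin 2) (Fin 2) k)) =
      dualSet ((Submodule.span k {!![(1:k),0;a,b], !![0,1;c,d]} :
        Submodule k (Matrix (Fin 2) (Fin 2) k)) : Set (Matrix (Fin 2) (Fin 2) k)) ↔
    (a ^ 2 + b ^ 2 = -1 ∧ ((c, d) = (-b, a) ∨ (c, d) = (b, -a))) := by
  set A : Matrix (Fin 2) (Fin 2) k := !![(1:k),0;a,b] with hA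
  set B : Matrix (Fin 2) (Fin 2) k := !![(0:k),1;c,d] with hB
  have trA : ∀ X : Matrix (Fin 2) (Fin 2) k,
      Matrix.trace (A * Xᵀ) = X 0 0 + a * X 1 0 + b * X 1 1 := by
    intro X
    simp [hA, Matrix.trace_fin_two, Matrix.mul_apply, Fin.sum_univ_two,
      Matrix.transpose_apply, Matrix.vecMul, dotProduct]
    ring
  have trB : ∀ X : Matrix (Fin 2) (Fin 2) k,
      Matrix.trace (B * Xᵀ) = X 0 1 + c * X 1 0 + d * X 1 1 := by
    intro X
    simp [hB, Matrix.trace_fin_two, Matrix.mul_apply, Fin.sum_univ_two,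
      Matrix.transpose_apply, Matrix.vecMul, dotProduct]
    ring
  constructor
  · intro h
    have hAd : A ∈ dualSet ((Submodule.span k {A, B} : Submodule k _) : Set _) := by
      rw [← h]; exact Submodule.subset_span (by simp)
    have hBd : B ∈ dualSet ((Submodule.span k {A, B} : Submodule k _) : Set _) := by
      rw [← h]; exact Submodule.subset_span (by simp)
    rw [mem_dual_span_iff] at hAd hBd
    have e1 : a ^ 2 + b ^ 2 = -1 := by
      have := hAd.1; rw [trA] at this; simp [hA] at this; linear_combination this
    have e2 : a * c + b * d = 0 := by
      have := hBd.1; rw [trA] at this; simp [hB] at this; linear_combination this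
    have hX1 : (!![-a,-c;1,0] : Matrix (Fin 2) (Fin 2) k) ∈
        ((Submodule.span k {A, B} : Submodule k _) : Set _) := by
      rw [h, mem_dual_span_iff, trA, trB]
      constructor <;> simp <;> ring
    have hX2 : (!![-b,-d;0,1] : Matrix (Fin 2) (Fin 2) k) ∈
        ((Submodule.span k {A, B} : Submodule k _) : Set _) := by
      rw [h, mem_dual_span_iff, trA, trB]
      constructor <;> simp <;> ring
    rw [SetLike.mem_coe, Submodule.mem_span_pair] at hX1 hX2
    obtain ⟨x, y, hxy⟩ := hX1
    obtain ⟨u, v, huv⟩ := hX2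
    have p00 := congrFun (congrFun hxy 0) 0
    have p01 := congrFun (congrFun hxy 0) 1
    have p10 := congrFun (congrFun hxy 1) 0
    have p11 := congrFun (congrFun hxy 1) 1
    simp [hA, hB, Matrix.add_apply, Matrix.smul_apply] at p00 p01 p10 p11
    have q11 := congrFun (congrFun huv 1) 1
    have q00 := congrFun (congrFun huv 0) 0
    have q01 := congrFun (congrFun huv 0) 1
    simp [hA, hB, Matrix.add_apply, Matrix.smul_apply] at q00 q01 q11
    subst p00 p01 q00 q01
    have e4 : a ^ 2 + c ^ 2 = -1 := by linear_combination -p10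
    have e5 : a * b + c * d = 0 := by linear_combination -p11
    have e6 : b ^ 2 + d ^ 2 = -1 := by linear_combination -q11
    refine ⟨e1, ?_⟩
    have hc2 : (c - b) * (c + b) = 0 := by linear_combination e4 - e1
    have hd2 : (d - a) * (d + a) = 0 := by linear_combination e6 - e1
    by_cases hb : b = 0
    · -- then c = 0 and d = ±a
      have hc0 : c = 0 := by
        rcases mul_eq_zero.mp hc2 with h' | h' <;> · rw [hb] at h'; simpa using h'
      rcases mul_eq_zero.mp hd2 with h' | h'
      · refine Or.inl ?_
        rw [Prod.mk.injEq]
        exact ⟨by rw [hc0, hb, neg_zero], by linear_combination h'⟩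
      · refine Or.inr ?_
        rw [Prod.mk.injEq]
        exact ⟨by rw [hc0, hb], by linear_combination h'⟩
    · rcases mul_eq_zero.mp hc2 with hc | hc
      · -- c = b
        have hd : a + d = 0 := by
          rcases mul_eq_zero.mp (show b * (a + d) = 0 by linear_combination e5 - d * hc)
            with h' | h'
          · exact absurd h' hb
          · exact h'
        refine Or.inr ?_
        rw [Prod.mk.injEq]
        exact ⟨by linear_combination hc, by linear_combination hd⟩
      · -- c = -b
        have hd : d - a = 0 := by
          rcases mul_eq_zero.mp (show b * (d - a) = 0 by linear_combination e2 - a * hc)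
            with h' | h'
          · exact absurd h' hb
          · exact h'
        refine Or.inl ?_
        rw [Prod.mk.injEq]
        exact ⟨by linear_combination hc, by linear_combination hd⟩
  · rintro ⟨ha, hcd⟩
    have hconds : a * c + b * d = 0 ∧ a * b + c * d = 0 ∧ c ^ 2 + d ^ 2 = -1 ∧
        a ^ 2 + c ^ 2 = -1 ∧ b ^ 2 + d ^ 2 = -1 := by
      rcases hcd with h' | h' <;> obtain ⟨hc', hd'⟩ := Prod.mk.inj h'
      · exact ⟨by linear_combination a * hc' + b * hd',
          by linear_combination d * hc' - b * hd',
          by linear_combination (c - b) * hc' + (d + a) * hd' + ha,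
          by linear_combination (c - b) * hc' + ha,
          by linear_combination (d + a) * hd' + ha⟩
      · exact ⟨by linear_combination a * hc' + b * hd',
          by linear_combination d * hc' + b * hd',
          by linear_combination (c + b) * hc' + (d - a) * hd' + ha,
          by linear_combination (c + b) * hc' + ha,
          by linear_combination (d - a) * hd' + ha⟩
    obtain ⟨e2, e5, e3, e4, e6⟩ := hconds
    ext X
    rw [SetLike.mem_coe, mem_dual_span_iff, trA, trB, Submodule.mem_span_pair]
    constructor
    · rintro ⟨x, y, rfl⟩
      constructor <;> simp [hA, hB, Matrix.add_apply, Matrix.smul_apply] <;>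
        [linear_combination x * ha + y * e2; linear_combination y * e3 + x * e2]
    · rintro ⟨h1, h2⟩
      refine ⟨X 0 0, X 0 1, ?_⟩
      ext i j
      fin_cases i <;> fin_cases j <;> simp [hA, hB, Matrix.add_apply, Matrix.smul_apply]
      · linear_combination a * h1 + c * h2 - X 1 0 * e4 - X 1 1 * e5
      · linear_combination b * h1 + d * h2 - X 1 0 * e5 - X 1 1 * e6
end

section
/- Let k = F_q with q odd and C ≤ k^{2×2} the span of A = [[1,0],[a,b]] and B = [[0,1],[c,d]]. Then C is a self-dual MRD code (self-dual and every nonzero element of C is invertible) if and only if -1 is not a square in k, a² + b² = -1, and (c,d) ∈ {(-b,a),(b,-a)}. -/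
open Matrix

lemma rank_two_iff' {k : Type*} [Field k] (M : Matrix (Fin 2) (Fin 2) k) :
    M.rank = 2 ↔ M.det ≠ 0 := by
  constructor
  · intro h hdet
    obtain ⟨v, hv, hMv⟩ := (Matrix.exists_mulVec_eq_zero_iff).2 hdet
    have hker : v ∈ LinearMap.ker M.mulVecLin := by simpa using hMv
    have hnt : Nontrivial (LinearMap.ker M.mulVecLin) :=
      Submodule.nontrivial_iff_ne_bot.2 (fun hb => hv (by simpa [hb] using hker))
    have h1 : 0 < Module.finrank k (LinearMap.ker M.mulVecLin) := Module.finrank_pos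
    have h2 := LinearMap.finrank_range_add_finrank_ker M.mulVecLin
    simp [Module.finrank_fintype_fun_eq_card] at h2
    unfold Matrix.rank at h
    omega
  · intro h
    have : IsUnit M := (Matrix.isUnit_iff_isUnit_det M).2 (isUnit_iff_ne_zero.2 h)
    simpa using Matrix.rank_of_isUnit M this

lemma trace_form' {k : Type*} [Field k] (N M : Matrix (Fin 2) (Fin 2) k) :
    Matrix.trace (N * Mᵀ) = N 0 0 * M 0 0 + N 0 1 * M 0 1 + N 1 0 * M 1 0 + N 1 1 * M 1 1 := by
  simp [Matrix.trace_fin_two, Matrix.mul_apply, Fin.sum_univ_two]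
  ring

lemma comb_mat' {k : Type*} [Field k] (a b c d x y : k) :
    x • !![(1:k),0;a,b] + y • !![0,1;c,d] = !![x, y; x*a+y*c, x*b+y*d] := by
  ext i j
  fin_cases i <;> fin_cases j <;> simp [mul_comm]

lemma trace_comb {k : Type*} [Field k] (a b c d x y u v : k) :
    Matrix.trace (!![u, v; u*a+v*c, u*b+v*d] * (!![x, y; x*a+y*c, x*b+y*d])ᵀ)
      = u*x + v*y + (u*a+v*c)*(x*a+y*c) + (u*b+v*d)*(x*b+y*d) := by
  rw [trace_form']
  simp

theorem selfDual_MRD_two_by_two_iff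
    {k : Type*} [Field k] [Fintype k] (hq : ringChar k ≠ 2) (a b c d : k) :
    (((Submodule.span k {!![(1:k),0;a,b], !![0,1;c,d]} :
        Submodule k (Matrix (Fin 2) (Fin 2) k)) : Set (Matrix (Fin 2) (Fin 2) k)) =
      dualSet ((Submodule.span k {!![(1:k),0;a,b], !![0,1;c,d]} :
        Submodule k (Matrix (Fin 2) (Fin 2) k)) : Set (Matrix (Fin 2) (Fin 2) k)) ∧
      (∀ M ∈ (Submodule.span k {!![(1:k),0;a,b], !![0,1;c,d]} :
        Submodule k (Matrix (Fin 2) (Fin 2) k)), M ≠ 0 → M.rank = 2)) ↔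
    (¬ IsSquare (-1 : k) ∧ a ^ 2 + b ^ 2 = -1 ∧
      ((c, d) = (-b, a) ∨ (c, d) = (b, -a))) := by
  set A : Matrix (Fin 2) (Fin 2) k := !![(1:k),0;a,b] with hAdef
  set B : Matrix (Fin 2) (Fin 2) k := !![(0:k),1;c,d] with hBdef
  have hAmem : A ∈ Submodule.span k {A, B} :=
    Submodule.subset_span (Set.mem_insert _ _)
  have hBmem : B ∈ Submodule.span k {A, B} :=
    Submodule.subset_span (Set.mem_insert_of_mem _ rfl)
  constructor
  · rintro ⟨hdual, hmrd⟩
    -- trace equations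
    have hAd : A ∈ dualSet ((Submodule.span k {A, B} : Submodule k _) :
        Set (Matrix (Fin 2) (Fin 2) k)) := hdual ▸ hAmem
    have hBd : B ∈ dualSet ((Submodule.span k {A, B} : Submodule k _) :
        Set (Matrix (Fin 2) (Fin 2) k)) := hdual ▸ hBmem
    have eqAA : a ^ 2 + b ^ 2 = -1 := by
      have := hAd A hAmem
      rw [trace_form'] at this
      simp [hAdef] at this
      linear_combination this
    have eqAB : a * c + b * d = 0 := by
      have := hAd B hBmem
      rw [trace_form'] at this
      simp [hAdef, hBdef] at this
      linear_combination this
    have eqBB : c ^ 2 + d ^ 2 = -1 := by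
      have := hBd B hBmem
      rw [trace_form'] at this
      simp [hBdef] at this
      linear_combination this
    -- b ≠ 0
    have hAne : A ≠ 0 := fun h => (one_ne_zero (α := k))
      (by simpa [hAdef] using congrFun (congrFun h (0 : Fin 2)) (0 : Fin 2))
    have hdetA : A.det ≠ 0 := (rank_two_iff' A).1 (hmrd A hAmem hAne)
    have hb : b ≠ 0 := by
      intro h; apply hdetA; simp [hAdef, Matrix.det_fin_two, h]
    -- c = ±b
    have hc2 : (c - b) * (c + b) = 0 := by
      linear_combination c^2*eqAA - b^2*eqBB - (a*c - b*d)*eqAB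
    have hcd : (c, d) = (-b, a) ∨ (c, d) = (b, -a) := by
      rcases mul_eq_zero.1 hc2 with h | h
      · right
        have hda : b * (d + a) = 0 := by linear_combination eqAB - a * h
        have hd : d = -a := by
          rcases mul_eq_zero.1 hda with h3 | h3
          · exact absurd h3 hb
          · linear_combination h3
        have hc : c = b := by linear_combination h
        rw [hc, hd]
      · left
        have hda : b * (d - a) = 0 := by linear_combination eqAB - a * h
        have hd : d = a := by
          rcases mul_eq_zero.1 hda with h3 | h3
          · exact absurd h3 hb
          · linear_combination h3
        have hc : c = -b := by linear_combination h
        rw [hc, hd]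
    refine ⟨?_, eqAA, hcd⟩
    -- ¬ IsSquare (-1)
    rintro ⟨s, hs⟩
    rcases hcd with h | h
    · rw [Prod.mk.injEq] at h
      obtain ⟨hc', hd'⟩ := h
      have hM : !![(1:k), s; 1*a + s*c, 1*b + s*d] ∈ Submodule.span k {A, B} := by
        rw [← comb_mat']
        exact Submodule.add_mem _ (Submodule.smul_mem _ _ hAmem) (Submodule.smul_mem _ _ hBmem)
      have hMne : (!![(1:k), s; 1*a + s*c, 1*b + s*d]) ≠ 0 := fun h => (one_ne_zero (α := k))
        (by simpa using congrFun (congrFun h (0 : Fin 2)) (0 : Fin 2))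
      have hdet := (rank_two_iff' _).1 (hmrd _ hM hMne)
      apply hdet
      rw [Matrix.det_fin_two_of]
      linear_combination s*hd' - s^2*hc' - b*hs
    · rw [Prod.mk.injEq] at h
      obtain ⟨hc', hd'⟩ := h
      have hM : !![a + s, b; (a+s)*a + b*c, (a+s)*b + b*d] ∈ Submodule.span k {A, B} := by
        rw [← comb_mat']
        exact Submodule.add_mem _ (Submodule.smul_mem _ _ hAmem) (Submodule.smul_mem _ _ hBmem)
      have hMne : (!![a + s, b; (a+s)*a + b*c, (a+s)*b + b*d]) ≠ 0 := fun h => hb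
        (by simpa using congrFun (congrFun h (0 : Fin 2)) (1 : Fin 2))
      have hdet := (rank_two_iff' _).1 (hmrd _ hM hMne)
      apply hdet
      rw [Matrix.det_fin_two_of]
      linear_combination (a+s)*b*hd' - b^2*hc' - b*hs - b*eqAA
  · rintro ⟨hns, eqab, hcd⟩
    have hb : b ≠ 0 := fun h => hns ⟨a, by linear_combination -eqab + b*h⟩
    constructor
    · ext X
      constructor
      · intro hX
        obtain ⟨x, y, hxy⟩ := Submodule.mem_span_pair.1 hX
        intro P hP
        obtain ⟨u, v, huv⟩ := Submodule.mem_span_pair.1 hP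
        rw [← huv, ← hxy, hAdef, hBdef, comb_mat', comb_mat', trace_comb]
        rcases hcd with h | h <;> rw [Prod.mk.injEq] at h <;> obtain ⟨hc', hd'⟩ := h <;>
          rw [hc', hd']
        · linear_combination (u*x + v*y)*eqab
        · linear_combination (u*x + v*y)*eqab
      · intro hX
        have t1 := hX A hAmem
        have t2 := hX B hBmem
        rw [trace_form'] at t1 t2
        simp [hAdef, hBdef] at t1 t2
        show X ∈ Submodule.span k {A, B}
        rw [Submodule.mem_span_pair]
        refine ⟨X 0 0, X 0 1, ?_⟩
        rw [hAdef, hBdef, comb_mat']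
        ext i j
        fin_cases i <;> fin_cases j <;> simp
        · rcases hcd with h | h <;> rw [Prod.mk.injEq] at h <;> obtain ⟨hc', hd'⟩ := h <;>
            simp only [hc', hd'] at t2 ⊢
          · linear_combination a*t1 - b*t2 - (X 1 0)*eqab
          · linear_combination a*t1 + b*t2 - (X 1 0)*eqab
        · rcases hcd with h | h <;> rw [Prod.mk.injEq] at h <;> obtain ⟨hc', hd'⟩ := h <;>
            simp only [hc', hd'] at t2 ⊢
          · linear_combination b*t1 + a*t2 - (X 1 1)*eqab
          · linear_combination b*t1 - a*t2 - (X 1 1)*eqab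
    · intro M hM hMne
      obtain ⟨x, y, hxy⟩ := Submodule.mem_span_pair.1 hM
      have hMeq : M = !![x, y; x*a+y*c, x*b+y*d] := by
        rw [← hxy, hAdef, hBdef, comb_mat']
      have hzero : ¬ (x = 0 ∧ y = 0) := by
        rintro ⟨hx0, hy0⟩
        apply hMne
        rw [hMeq, hx0, hy0]
        ext i j
        fin_cases i <;> fin_cases j <;> simp
      rw [rank_two_iff', hMeq, Matrix.det_fin_two_of]
      intro hdet
      rcases hcd with h | h <;> rw [Prod.mk.injEq] at h <;> obtain ⟨hc', hd'⟩ := h <;>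
        rw [hc', hd'] at hdet
      · have hxy2 : x^2 + y^2 = 0 := by
          rcases mul_eq_zero.1 (show b * (x^2 + y^2) = 0 by linear_combination hdet) with h3 | h3
          · exact absurd h3 hb
          · exact h3
        by_cases hy : y = 0
        · exact hzero ⟨pow_eq_zero_iff (n := 2) (by norm_num) |>.1
            (by linear_combination hxy2 - y*hy), hy⟩
        · exact hns ⟨x/y, by field_simp; linear_combination -hxy2⟩
      · by_cases hy : y = 0
        · have hx : x = 0 := by
            rcases mul_eq_zero.1 (show b * (x*x) = 0 by linear_combination hdet + (2*a*x + b*y)*hy) with h3 | h3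
            · exact absurd h3 hb
            · exact (mul_self_eq_zero).1 h3
          exact hzero ⟨hx, hy⟩
        · exact hns ⟨(b*x - a*y)/y, by field_simp; linear_combination -b*hdet - y^2*eqab⟩
end

section
/- Let k be a finite field of odd characteristic and A ∈ k^{n×n} a symmetric invertible matrix. Then there exists X ∈ GL_n(k) with A = X X^T if and only if det(A) is a nonzero square in k. -/
/-!
Over a field of characteristic not 2 a symmetric matrix is congruent to a diagonal one,
`Pᵀ A P = diag(d₁, …, dₙ)`. Over a finite field of odd order every binary form `a x² + b y²`
with `a b ≠ 0` represents `1`, which gives the congruence `diag(a, b) ~ diag(1, a b)`.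
Repeating it collapses the diagonal to `diag(1, …, 1, d₁ ⋯ dₙ)`, and `d₁ ⋯ dₙ = det(P)² det A`,
so `A ~ 1` as soon as `det A` is a square. Conversely `det (X Xᵀ) = (det X)²`.
-/

open Matrix

theorem FiniteField.exists_mul_sq_add_mul_sq_eq_one {k : Type*} [Field k] [Fintype k]
    (hk : ringChar k ≠ 2) {a b : k} (ha : a ≠ 0) (hb : b ≠ 0) :
    ∃ x y : k, a * x ^ 2 + b * y ^ 2 = 1 := by
  open Polynomial in
  obtain ⟨x, y, hxy⟩ := FiniteField.exists_root_sum_quadratic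
    (f := C a * X ^ 2 + C 0 * X + C (-1)) (g := C b * X ^ 2 + C 0 * X + C 0)
    (degree_quadratic ha) (degree_quadratic hb) (FiniteField.odd_card_of_char_ne_two hk)
  refine ⟨x, y, ?_⟩
  simp only [Polynomial.eval_add, Polynomial.eval_mul, Polynomial.eval_pow, Polynomial.eval_C,
    Polynomial.eval_X] at hxy
  linear_combination hxy

namespace Matrix

section CommRing

variable {ι ι' α R : Type*} [Fintype ι] [DecidableEq ι] [CommRing R]

def IsCongruentToOne (A : Matrix ι ι R) : Prop :=
  ∃ X : Matrix ι ι R, IsUnit X.det ∧ A = X * Xᵀ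

theorem IsCongruentToOne.isSquare_det {A : Matrix ι ι R} (h : A.IsCongruentToOne) :
    IsSquare A.det := by
  obtain ⟨X, -, rfl⟩ := h
  exact ⟨X.det, by rw [det_mul, det_transpose]⟩

theorem isCongruentToOne_one : (1 : Matrix ι ι R).IsCongruentToOne :=
  ⟨1, by simp, by simp⟩

theorem IsCongruentToOne.of_mul_mul_transpose {A N : Matrix ι ι R} (hN : IsUnit N.det)
    (h : (N * A * Nᵀ).IsCongruentToOne) : A.IsCongruentToOne := by
  obtain ⟨Y, hY, hNA⟩ := h
  refine ⟨N⁻¹ * Y, by rw [det_mul]; exact (isUnit_nonsing_inv_det N hN).mul hY, ?_⟩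
  have hNT : IsUnit Nᵀ.det := by rwa [det_transpose]
  calc A = N⁻¹ * (N * A * Nᵀ) * Nᵀ⁻¹ := by
        simp only [← Matrix.mul_assoc, nonsing_inv_mul _ hN, Matrix.one_mul,
          Matrix.mul_nonsing_inv_cancel_right _ _ hNT]
    _ = N⁻¹ * Y * (N⁻¹ * Y)ᵀ := by
        rw [hNA, transpose_mul, transpose_nonsing_inv]; simp only [Matrix.mul_assoc]

theorem IsCongruentToOne.submatrix_equiv [Fintype ι'] [DecidableEq ι'] {A : Matrix ι ι R}
    (h : A.IsCongruentToOne) (e : ι' ≃ ι) : (A.submatrix e e).IsCongruentToOne := by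
  obtain ⟨X, hX, rfl⟩ := h
  exact ⟨X.submatrix e e, by rwa [det_submatrix_equiv_self],
    by rw [transpose_submatrix, submatrix_mul_equiv]⟩

theorem isCongruentToOne_diagonal_comp_equiv_iff [Fintype ι'] [DecidableEq ι'] (d : ι → R)
    (e : ι' ≃ ι) : (diagonal (d ∘ e)).IsCongruentToOne ↔ (diagonal d).IsCongruentToOne := by
  refine ⟨fun h => ?_, fun h => by simpa using h.submatrix_equiv e⟩
  simpa [Function.comp_def] using h.submatrix_equiv e.symm

theorem IsCongruentToOne.fromBlocks_zero [Fintype α] [DecidableEq α] {A : Matrix ι ι R}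
    {D : Matrix α α R} (hA : A.IsCongruentToOne) (hD : D.IsCongruentToOne) :
    (fromBlocks A 0 0 D).IsCongruentToOne := by
  obtain ⟨X, hX, rfl⟩ := hA
  obtain ⟨Y, hY, rfl⟩ := hD
  exact ⟨fromBlocks X 0 0 Y, by rw [det_fromBlocks_zero₁₂]; exact hX.mul hY,
    by rw [fromBlocks_transpose, fromBlocks_multiply]; simp⟩

theorem isCongruentToOne_diagonal_mul_self (c : ι → R) (hc : ∀ i, IsUnit (c i)) :
    (diagonal fun i => c i * c i).IsCongruentToOne :=
  ⟨diagonal c, by rw [det_diagonal]; exact IsUnit.prod_univ_iff.mpr hc, by simp⟩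

theorem mul_diagonal_vec2_mul_transpose {a b x y : R} (hxy : a * x ^ 2 + b * y ^ 2 = 1) :
    !![x, y; -b * y, a * x] * diagonal ![a, b] * !![x, y; -b * y, a * x]ᵀ =
      diagonal ![1, a * b] := by
  rw [diagonal_vec2, diagonal_vec2, ← Matrix.ext_iff]
  intro i j
  fin_cases i <;> fin_cases j <;> simp [Matrix.mul_apply, Fin.sum_univ_two]
  · linear_combination hxy
  · ring
  · ring
  · linear_combination a * b * hxy

theorem IsCongruentToOne.diagonal_sumElim_vec2_of_one_mul [Fintype α] [DecidableEq α]
    {a b x y : R} (hxy : a * x ^ 2 + b * y ^ 2 = 1) {w : α → R}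
    (h : (diagonal (Sum.elim ![1, a * b] w)).IsCongruentToOne) :
    (diagonal (Sum.elim ![a, b] w)).IsCongruentToOne := by
  have hN : IsUnit (!![x, y; -b * y, a * x]).det := by
    rw [det_fin_two_of]
    convert isUnit_one
    linear_combination hxy
  refine IsCongruentToOne.of_mul_mul_transpose (N := fromBlocks !![x, y; -b * y, a * x] 0 0 1)
    (by rw [det_fromBlocks_zero₁₂, det_one, mul_one]; exact hN) ?_
  rw [← fromBlocks_diagonal] at h ⊢
  rw [fromBlocks_transpose, fromBlocks_multiply, fromBlocks_multiply]
  simpa only [Matrix.mul_zero, Matrix.zero_mul, add_zero, zero_add, transpose_zero,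
    transpose_one, Matrix.one_mul, Matrix.mul_one, mul_diagonal_vec2_mul_transpose hxy] using h

theorem IsCongruentToOne.diagonal_sumElim_vecCons_one [Fintype α] [DecidableEq α] {c : R}
    {w : α → R} (h : (diagonal (Sum.elim (fun _ : Fin 1 => c) w)).IsCongruentToOne) :
    (diagonal (Sum.elim ![1, c] w)).IsCongruentToOne := by
  let e : Fin 1 ⊕ (Fin 1 ⊕ α) ≃ Fin 2 ⊕ α :=
    (Equiv.sumAssoc _ _ _).symm.trans (Equiv.sumCongr finSumFinEquiv (Equiv.refl α))
  have he : Sum.elim ![1, c] w ∘ e =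
      Sum.elim (fun _ : Fin 1 => 1) (Sum.elim (fun _ : Fin 1 => c) w) := by
    ext (i | i | i) <;> first | fin_cases i; rfl | rfl
  rw [← isCongruentToOne_diagonal_comp_equiv_iff _ e, he, ← fromBlocks_diagonal, diagonal_one]
  exact isCongruentToOne_one.fromBlocks_zero h

end CommRing

theorem exists_isUnit_det_transpose_mul_mul_eq_diagonal {K ι : Type*} [Field K]
    [Invertible (2 : K)] [Fintype ι] [DecidableEq ι] {A : Matrix ι ι K} (hA : A.IsSymm) :
    ∃ P : Matrix ι ι K, IsUnit P.det ∧ ∃ d : ι → K, Pᵀ * A * P = diagonal d := by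
  obtain ⟨v, hv⟩ := LinearMap.BilinForm.exists_orthogonal_basis
    (LinearMap.BilinForm.isSymm_iff.mp (isSymm_toBilin'_iff_isSymm.mpr hA))
  let e : Fin (Module.finrank K (ι → K)) ≃ ι := Fintype.equivOfCardEq (by simp)
  let b := v.reindex e
  let P := (Pi.basisFun K ι).toMatrix b
  have := (Pi.basisFun K ι).invertibleToMatrix b
  have hPAP : Pᵀ * A * P = LinearMap.BilinForm.toMatrix b A.toBilin' := by
    rw [← LinearMap.BilinForm.toMatrix_mul_basis_toMatrix (Pi.basisFun K ι),
      LinearMap.BilinForm.toMatrix_basisFun, LinearMap.BilinForm.toMatrix'_toBilin']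
  have hdiag : (LinearMap.BilinForm.toMatrix b A.toBilin').IsDiag := by
    intro i j hij
    rw [LinearMap.BilinForm.toMatrix_apply, v.reindex_apply, v.reindex_apply]
    exact hv (e.symm.injective.ne hij)
  exact ⟨P, isUnit_det_of_invertible P, _, hPAP.trans hdiag.diagonal_diag.symm⟩

theorem isCongruentToOne_diagonal {k : Type*} {ι : Type} [Field k] [Fintype k]
    (hk : ringChar k ≠ 2) [Fintype ι] [DecidableEq ι] {d : ι → k} (hd : ∀ i, d i ≠ 0)
    (hsq : IsSquare (∏ i, d i)) :
    (diagonal d).IsCongruentToOne := by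
  induction h : Fintype.card ι using Nat.strong_induction_on generalizing ι with
  | _ n ih =>
  rcases n with _ | _ | m
  · have := Fintype.card_eq_zero_iff.mp h
    exact ⟨1, by simp, Subsingleton.elim _ _⟩
  · obtain ⟨i₀, hi₀⟩ := Fintype.card_eq_one_iff.mp h
    obtain ⟨c, hc⟩ := hsq
    rw [Fintype.prod_eq_single i₀ fun i hi => (hi (hi₀ i)).elim] at hc
    obtain rfl : d = fun _ => c * c := funext fun i => hi₀ i ▸ hc
    exact isCongruentToOne_diagonal_mul_self _ fun _ =>
      isUnit_iff_ne_zero.mpr (left_ne_zero_of_mul (hd i₀))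
  · obtain ⟨e⟩ : Nonempty (Fin 2 ⊕ Fin m ≃ ι) :=
      ⟨Fintype.equivOfCardEq (by simp only [Fintype.card_sum, Fintype.card_fin, h]; omega)⟩
    have hde : d ∘ e = Sum.elim ![d (e (.inl 0)), d (e (.inl 1))] (d ∘ e ∘ Sum.inr) := by
      ext (i | i) <;> first | fin_cases i <;> rfl | rfl
    obtain ⟨x, y, hxy⟩ :=
      FiniteField.exists_mul_sq_add_mul_sq_eq_one hk (hd (e (.inl 0))) (hd (e (.inl 1)))
    rw [← isCongruentToOne_diagonal_comp_equiv_iff d e, hde]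
    -- `diag(a, b, w) ~ diag(1, a b, w)`, and `diag(a b, w)` has one entry fewer
    refine (IsCongruentToOne.diagonal_sumElim_vecCons_one ?_).diagonal_sumElim_vec2_of_one_mul hxy
    refine ih (m + 1) (by omega) ?_ ?_ (by simp [add_comm])
    · rintro (i | i)
      exacts [mul_ne_zero (hd _) (hd _), hd _]
    · convert hsq using 1
      rw [← Fintype.prod_equiv e (d ∘ e) d fun _ => rfl, hde]
      simp [Fintype.prod_sum_type, Fin.prod_univ_two]

end Matrix

theorem symm_matrix_eq_XXt_iff_det_square
    {k : Type*} [Field k] [Fintype k] (hq : ringChar k ≠ 2) {n : ℕ}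
    (A : Matrix (Fin n) (Fin n) k) (hsym : A = Aᵀ) (hA : IsUnit A.det) :
    (∃ X : Matrix (Fin n) (Fin n) k, IsUnit X.det ∧ A = X * Xᵀ) ↔
      IsSquare A.det := by
  refine ⟨IsCongruentToOne.isSquare_det, fun ⟨s, hs⟩ => ?_⟩
  have : Invertible (2 : k) := invertibleOfNonzero (Ring.two_ne_zero hq)
  obtain ⟨P, hP, d, hPAP⟩ := exists_isUnit_det_transpose_mul_mul_eq_diagonal hsym.symm
  have hdet : ∏ i, d i = P.det * P.det * A.det := by
    rw [← det_diagonal, ← hPAP, det_mul, det_mul, det_transpose]; ring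
  have hd : IsUnit (∏ i, d i) := hdet ▸ (hP.mul hP).mul hA
  refine IsCongruentToOne.of_mul_mul_transpose (N := Pᵀ) (by rwa [det_transpose]) ?_
  rw [transpose_transpose, hPAP]
  exact isCongruentToOne_diagonal hq (fun i => (IsUnit.prod_univ_iff.mp hd i).ne_zero)
    ⟨P.det * s, by rw [hdet, hs]; ring⟩
end

section
/- With notation as before (K ≅ F_{q^n} embedded in k^{n×n} via a normal basis, A the Frobenius permutation matrix), for every B ∈ K and every ℓ with 1 ≤ ℓ ≤ n-1, trace(B A^ℓ) = 0. -/
/-! The Frobenius `φ : x ↦ x ^ q` sends `b i` to `b (i + 1)`, so `A` is the matrix of `φ` and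
`trace (B A^ℓ) = ∑ i, coord_i (β · b (i + ℓ))`. Since `φ` shifts coordinates cyclically,
`coord_i y = coord_0 (φ^{-i} y)`, which turns the sum into `coord_0 (Tr(β) · b ℓ)`. As `Tr(β)`
lies in `k` and `ℓ ≠ 0 mod n`, this coordinate vanishes. -/

theorem Module.Basis.repr_apply_of_apply_basis_eq {ι R M : Type*} [Semiring R]
    [AddCommMonoid M] [Module R M] (b : Basis ι R M) {f : M →ₗ[R] M} {e : ι → ι}
    (he : Function.Injective e) (hf : ∀ i, f (b i) = b (e i)) (x : M) (i : ι) :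
    b.repr (f x) (e i) = b.repr x i := by
  classical
  have : b.coord (e i) ∘ₗ f = b.coord i := b.ext fun j => by
    simp [hf, Finsupp.single_apply, he.eq_iff]
  exact LinearMap.congr_fun this x

namespace FiniteField

variable {k K : Type*} [Field k] [Fintype k]

theorem frobeniusAlgHom_pow_apply {R : Type*} [CommRing R] [Algebra k R] (m : ℕ) (x : R) :
    (frobeniusAlgHom k R ^ m) x = x ^ Fintype.card k ^ m := by
  rw [AlgHom.coe_pow, coe_frobeniusAlgHom, pow_iterate]

variable [Field K] [Fintype K] [Algebra k K]

theorem frobeniusAlgHom_pow_mod_finrank (m : ℕ) :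
    frobeniusAlgHom k K ^ (m % Module.finrank k K) = frobeniusAlgHom k K ^ m := by
  rw [← orderOf_frobeniusAlgHom, pow_mod_orderOf]

theorem sum_frobeniusAlgHom_pow_eq_algebraMap_trace (x : K) :
    ∑ j ∈ Finset.range (Module.finrank k K), (frobeniusAlgHom k K ^ j) x =
      algebraMap k K (Algebra.trace k K x) := by
  simp only [algebraMap_trace_eq_sum_pow, frobeniusAlgHom_pow_apply, Nat.card_eq_fintype_card]

section NormalBasis

variable {n : ℕ} [NeZero n] {γ : K} {b : Module.Basis (Fin n) k K}

theorem frobeniusAlgHom_pow_apply_normalBasis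
    (hb : ∀ i : Fin n, b i = γ ^ (Fintype.card k ^ (i : ℕ))) (m : ℕ) (i : Fin n) :
    (frobeniusAlgHom k K ^ m) (b i) = b (i + Fin.ofNat n m) := by
  have hn : Module.finrank k K = n := by simp [Module.finrank_eq_card_basis b]
  have hb' : ∀ j : Fin n, b j = (frobeniusAlgHom k K ^ (j : ℕ)) γ := fun j => by
    rw [hb, frobeniusAlgHom_pow_apply]
  rw [hb', hb', ← AlgHom.mul_apply, ← pow_add, ← frobeniusAlgHom_pow_mod_finrank,
    ← frobeniusAlgHom_pow_mod_finrank ((i + Fin.ofNat n m : Fin n) : ℕ), hn, Fin.val_add,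
    Fin.val_ofNat, Nat.mod_mod, Nat.add_mod_mod, add_comm]

theorem repr_frobeniusAlgHom_pow_apply_add
    (hb : ∀ i : Fin n, b i = γ ^ (Fintype.card k ^ (i : ℕ))) (m : ℕ) (x : K) (i : Fin n) :
    b.repr ((frobeniusAlgHom k K ^ m) x) (i + Fin.ofNat n m) = b.repr x i :=
  b.repr_apply_of_apply_basis_eq (f := (frobeniusAlgHom k K ^ m).toLinearMap)
    (add_left_injective _) (frobeniusAlgHom_pow_apply_normalBasis hb m) x i

theorem toMatrix_frobeniusAlgHom_normalBasis
    (hb : ∀ i : Fin n, b i = γ ^ (Fintype.card k ^ (i : ℕ))) (i j : Fin n) :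
    LinearMap.toMatrix b b (frobeniusAlgHom k K).toLinearMap i j =
      if i = j + 1 then 1 else 0 := by
  rw [LinearMap.toMatrix_apply, AlgHom.toLinearMap_apply, ← pow_one (frobeniusAlgHom k K),
    frobeniusAlgHom_pow_apply_normalBasis hb, b.repr_self, Finsupp.single_apply]
  exact if_congr eq_comm rfl rfl

theorem sum_repr_mul_normalBasis_add_eq_zero
    (hb : ∀ i : Fin n, b i = γ ^ (Fintype.card k ^ (i : ℕ))) (β : K) {t : Fin n}
    (ht : t ≠ 0) :
    ∑ i, b.repr (β * b (i + t)) i = 0 := by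
  set φ := frobeniusAlgHom k K
  have hn : Module.finrank k K = n := by simp [Module.finrank_eq_card_basis b]
  have shift_to_zero :
      ∀ i, b.repr (β * b (i + t)) i = b.repr ((φ ^ (-i : Fin n).val) β * b t) 0 := by
    intro i
    rw [← repr_frobeniusAlgHom_pow_apply_add hb (-i : Fin n).val, Fin.ofNat_val_eq_self,
      add_neg_cancel, map_mul, frobeniusAlgHom_pow_apply_normalBasis hb, Fin.ofNat_val_eq_self,
      add_neg_cancel_comm]
  calc ∑ i, b.repr (β * b (i + t)) i
      = b.repr ((∑ i : Fin n, (φ ^ (-i : Fin n).val) β) * b t) 0 := by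
        simp only [shift_to_zero, Finset.sum_mul, map_sum, Finsupp.finsetSum_apply]
    _ = b.repr (algebraMap k K (Algebra.trace k K β) * b t) 0 := by
        rw [Fintype.sum_equiv (Equiv.neg (Fin n)) (fun i => (φ ^ (-i : Fin n).val) β)
            (fun i => (φ ^ (i : ℕ)) β) fun _ => rfl,
          Fin.sum_univ_eq_sum_range (fun j => (φ ^ j) β),
          ← sum_frobeniusAlgHom_pow_eq_algebraMap_trace, hn]
    _ = 0 := by
        rw [← Algebra.smul_def, map_smul, b.repr_self, Finsupp.smul_apply,
          Finsupp.single_eq_of_ne ht.symm, smul_zero]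

end NormalBasis

end FiniteField

open FiniteField in
theorem trace_mulMatrix_mul_pow_frobenius_perm_eq_zero
    {k K : Type*} [Field k] [Fintype k] [Field K] [Fintype K] [Algebra k K]
    {n : ℕ} [NeZero n] (γ : K) (b : Module.Basis (Fin n) k K)
    (hb : ∀ i : Fin n, b i = γ ^ (Fintype.card k ^ (i : ℕ)))
    (A : Matrix (Fin n) (Fin n) k)
    (hA : ∀ i j : Fin n, A i j = if i = j + 1 then 1 else 0)
    (β : K) :
    ∀ ℓ : ℕ, 1 ≤ ℓ → ℓ ≤ n - 1 →
      Matrix.trace (Algebra.leftMulMatrix b β * A ^ ℓ) = 0 := by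
  intro ℓ hℓ₁ hℓ₂
  have hA_eq : A = LinearMap.toMatrix b b (frobeniusAlgHom k K).toLinearMap :=
    Matrix.ext fun i j => by
      rw [hA, toMatrix_frobeniusAlgHom_normalBasis hb]
  have hℓ : Fin.ofNat n ℓ ≠ 0 := by
    rw [Ne, Fin.ext_iff, Fin.val_ofNat, Fin.val_zero, Nat.mod_eq_of_lt (by omega)]
    omega
  calc Matrix.trace (Algebra.leftMulMatrix b β * A ^ ℓ)
      = Matrix.trace (LinearMap.toMatrix b b
          (Algebra.lmul k K β * (frobeniusAlgHom k K).toLinearMap ^ ℓ)) := by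
        rw [hA_eq, Algebra.leftMulMatrix_apply, LinearMap.toMatrix_pow, LinearMap.toMatrix_mul]
    _ = ∑ i, b.repr (β * b (i + Fin.ofNat n ℓ)) i := by
        simp only [Matrix.trace, Matrix.diag, LinearMap.toMatrix_apply, Module.End.mul_apply,
          Module.End.pow_apply, AlgHom.coe_toLinearMap, ← AlgHom.coe_pow,
          frobeniusAlgHom_pow_apply_normalBasis hb, Algebra.coe_lmul_eq_mul, LinearMap.mul_apply']
    _ = 0 := sum_repr_mul_normalBasis_add_eq_zero hb β hℓ
end

section
/- With K ⊂ k^{n×n} the multiplication-matrix algebra of F_{q^n} w.r.t. a normal basis and A the Frobenius permutation matrix, the full matrix ring decomposes as k^{n×n} = K ⊕ KA ⊕ KA² ⊕ … ⊕ KA^{n-1} (a direct sum of k-subspaces). -/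
/-!
Let `σ` be the Frobenius `x ↦ x ^ q` of `K = 𝔽_{q^n}` over `k = 𝔽_q`. Its powers `1, σ, …, σ^{n-1}`
are `n` distinct field automorphisms, hence linearly independent over `K` in the `n`-dimensional
`K`-vector space `End_k K` (Dedekind); so `End_k K = K ⊕ Kσ ⊕ ⋯ ⊕ Kσ^{n-1}`. In a normal basis
`γ, γ^q, …, γ^{q^{n-1}}` the Frobenius permutes the basis cyclically, so its matrix is the cyclic
permutation matrix `A`, and the matrix algebra isomorphism `End_k K ≃ k^{n×n}` carries the
decomposition to `k^{n×n} = K ⊕ KA ⊕ ⋯ ⊕ KA^{n-1}`.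
-/

open Matrix

open Module Submodule

theorem LinearIndependent.isInternal_span_singleton_of_card_eq_finrank
    {K V ι : Type*} [DivisionRing K] [AddCommGroup V] [Module K V] [FiniteDimensional K V]
    [Fintype ι] [DecidableEq ι] {v : ι → V} (hv : LinearIndependent K v)
    (hcard : Fintype.card ι = finrank K V) :
    DirectSum.IsInternal fun i => K ∙ v i :=
  DirectSum.isInternal_submodule_of_iSupIndep_of_iSup_eq_top hv.iSupIndep_span_singleton
    (by rw [← span_range_eq_iSup, hv.span_eq_top_of_card_eq_finrank' hcard])

theorem DirectSum.IsInternal.restrictScalars {R S M ι : Type*} [Semiring R] [Semiring S]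
    [AddCommMonoid M] [Module R M] [Module S M] [SMul R S] [IsScalarTower R S M] [DecidableEq ι]
    {p : ι → Submodule S M} (h : IsInternal p) :
    IsInternal fun i => (p i).restrictScalars R :=
  h

theorem DirectSum.IsInternal.map_linearEquiv {R M N ι : Type*} [Ring R] [AddCommGroup M]
    [Module R M] [AddCommGroup N] [Module R N] [DecidableEq ι] {p : ι → Submodule R M}
    (h : IsInternal p) (e : M ≃ₗ[R] N) :
    IsInternal fun i => (p i).map (e : M →ₗ[R] N) := by
  rw [isInternal_submodule_iff_iSupIndep_and_iSup_eq_top] at h ⊢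
  refine ⟨(iSupIndep_map_orderIso_iff (orderIsoMapComap e)).mpr h.1, ?_⟩
  rw [← Submodule.map_iSup, h.2, Submodule.map_top, LinearEquiv.range]

theorem Module.End.map_mulRight_range_lmul {k K : Type*} [CommSemiring k] [Semiring K]
    [Algebra k K] (f : K →ₗ[k] K) :
    map (LinearMap.mulRight k f) (LinearMap.range (Algebra.lmul k K).toLinearMap) =
      (K ∙ f).restrictScalars k := by
  ext g
  simp only [mem_map, LinearMap.mem_range, AlgHom.toLinearMap_apply, restrictScalars_mem,
    mem_span_singleton]
  constructor
  · rintro ⟨_, ⟨a, rfl⟩, rfl⟩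
    exact ⟨a, rfl⟩
  · rintro ⟨a, rfl⟩
    exact ⟨_, ⟨a, rfl⟩, rfl⟩

theorem AlgHom.isInternal_map_mulRight_range_lmul {k K ι : Type*} [Field k] [Field K]
    [Algebra k K] [FiniteDimensional k K] [Fintype ι] [DecidableEq ι] {σ : ι → K →ₐ[k] K}
    (hσ : Function.Injective σ) (hcard : Fintype.card ι = finrank k K) :
    DirectSum.IsInternal fun i =>
      map (LinearMap.mulRight k (σ i).toLinearMap)
        (LinearMap.range (Algebra.lmul k K).toLinearMap) := by
  simp_rw [Module.End.map_mulRight_range_lmul]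
  have hindep := (linearIndependent_toLinearMap k K K).comp σ hσ
  exact (hindep.isInternal_span_singleton_of_card_eq_finrank
    (hcard.trans (finrank_linearMap_self k K K).symm)).restrictScalars

theorem AlgEquiv.map_map_mulRight_range {R M A B : Type*} [CommSemiring R] [AddCommMonoid M]
    [Module R M] [Semiring A] [Algebra R A] [Semiring B] [Algebra R B] (e : A ≃ₐ[R] B) (a : A)
    (f : M →ₗ[R] A) :
    map e.toLinearMap (map (LinearMap.mulRight R a) (LinearMap.range f)) =
      map (LinearMap.mulRight R (e a)) (LinearMap.range (e.toLinearMap ∘ₗ f)) := by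
  simp only [← LinearMap.range_comp]
  congr 1
  ext x
  simp

theorem Algebra.map_mulRight_range_leftMulMatrix {R S ι : Type*} [CommRing R] [Ring S]
    [Algebra R S] [Fintype ι] [DecidableEq ι] (b : Basis ι R S) (f : S →ₗ[R] S) :
    map (LinearMap.mulRight R (LinearMap.toMatrixAlgEquiv b f))
        (LinearMap.range (leftMulMatrix b).toLinearMap) =
      map (LinearMap.toMatrixAlgEquiv b).toLinearMap
        (map (LinearMap.mulRight R f) (LinearMap.range (lmul R S).toLinearMap)) := by
  rw [AlgEquiv.map_map_mulRight_range]
  rfl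

theorem Function.IsPeriodicPt.apply_iterate_fin {α : Type*} {n : ℕ} [NeZero n] {f : α → α}
    {x : α} (hx : IsPeriodicPt f n x) (j : Fin n) : f (f^[j] x) = f^[(j + 1 : Fin n)] x := by
  rw [← iterate_succ_apply' f, ← hx.iterate_mod_apply, Fin.val_add, Fin.val_one', Nat.add_mod_mod]

theorem LinearMap.toMatrix_eq_of_apply_eq_succ {R M : Type*} [CommSemiring R] [AddCommMonoid M]
    [Module R M] {n : ℕ} [NeZero n] (b : Basis (Fin n) R M) {f : M →ₗ[R] M}
    (hf : ∀ j, f (b j) = b (j + 1)) {A : Matrix (Fin n) (Fin n) R}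
    (hA : ∀ i j : Fin n, A i j = if i = j + 1 then 1 else 0) :
    LinearMap.toMatrix b b f = A := by
  ext i j
  rw [LinearMap.toMatrix_apply, hf, b.repr_self, Finsupp.single_apply, hA]
  exact if_congr eq_comm rfl rfl

theorem FiniteField.toMatrix_frobeniusAlgHom_of_normal_basis {k K : Type*} [Field k] [Fintype k]
    [Field K] [Fintype K] [Algebra k K] {n : ℕ} [NeZero n] {γ : K} (b : Basis (Fin n) k K)
    (hb : ∀ i : Fin n, b i = γ ^ (Fintype.card k ^ (i : ℕ))) {A : Matrix (Fin n) (Fin n) k}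
    (hA : ∀ i j : Fin n, A i j = if i = j + 1 then 1 else 0) :
    LinearMap.toMatrix b b (frobeniusAlgHom k K).toLinearMap = A := by
  have hγ : Function.IsPeriodicPt (frobeniusAlgHom k K) n γ := by
    rw [Function.IsPeriodicPt, Function.IsFixedPt, coe_frobeniusAlgHom, pow_iterate,
      ← Fintype.card_fin n, ← finrank_eq_card_basis b, ← Module.card_eq_pow_finrank]
    exact pow_card γ
  have hb' (j : Fin n) : b j = (frobeniusAlgHom k K)^[j] γ := by
    rw [hb, coe_frobeniusAlgHom, pow_iterate]
  refine LinearMap.toMatrix_eq_of_apply_eq_succ b (fun j => ?_) hA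
  rw [AlgHom.toLinearMap_apply, hb', hb', hγ.apply_iterate_fin]

theorem matrix_ring_internal_direct_sum_cyclic_algebra
    {k K : Type*} [Field k] [Fintype k] [Field K] [Fintype K] [Algebra k K]
    {n : ℕ} [NeZero n] (γ : K) (b : Module.Basis (Fin n) k K)
    (hb : ∀ i : Fin n, b i = γ ^ (Fintype.card k ^ (i : ℕ)))
    (A : Matrix (Fin n) (Fin n) k)
    (hA : ∀ i j : Fin n, A i j = if i = j + 1 then 1 else 0) :
    DirectSum.IsInternal (fun i : Fin n =>
      Submodule.map (LinearMap.mulRight k (A ^ (i : ℕ)))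
        (LinearMap.range (Algebra.leftMulMatrix b).toLinearMap)) := by
  set σ := FiniteField.frobeniusAlgHom k K
  have hn : finrank k K = n := by rw [finrank_eq_card_basis b, Fintype.card_fin]
  have hσ : Function.Injective fun i : Fin n => σ ^ (i : ℕ) := by
    subst hn
    exact (FiniteField.bijective_frobeniusAlgHom_pow k K).injective
  have hpow (i : ℕ) : LinearMap.toMatrixAlgEquiv b (σ ^ i).toLinearMap = A ^ i := by
    rw [← AlgHom.toEnd_apply, map_pow, map_pow,
      ← FiniteField.toMatrix_frobeniusAlgHom_of_normal_basis b hb hA]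
    rfl
  simp_rw [← hpow, Algebra.map_mulRight_range_leftMulMatrix,
    ← AlgEquiv.toLinearEquiv_toLinearMap]
  exact (AlgHom.isInternal_map_mulRight_range_lmul hσ (by rw [Fintype.card_fin, hn])).map_linearEquiv _
end

section
/- Let q be odd and n even, K = F_{q^n}, k = F_q. Then the determinant of the Gram matrix T = (Tr_{K/k}(β_i β_j)) of the trace bilinear form with respect to any k-basis (β_1,…,β_n) of K is a non-square in F_q^×. -/
/-!
Index a basis `b` of a finite Galois extension `L/K` by the Galois group and let
`δ = det (σ (b τ))`. Since `trace x = ∑ σ x`, the trace Gram matrix is `M Mᵀ` with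
`M = (σ (b τ))`, so its determinant is `δ²`. Applying `σ` permutes the columns of `M` by left
multiplication, so `σ δ = sign (σ * ·) • δ`. If the discriminant is a square `c²` with `c ∈ K`,
then `δ = ±c` is fixed by every `σ`, and since `δ ≠ 0` and `2 ≠ 0`, every left multiplication is
even. For finite fields the Galois group is cyclic of order `n`, and left multiplication by a
generator is an `n`-cycle, which is odd when `n` is even.
-/

open Matrix Equiv

namespace Equiv.Perm

variable {G : Type*} [Group G]

theorem isCycle_mulLeft_of_forall_mem_zpowers {g : G} (hg : ∀ x, x ∈ Subgroup.zpowers g)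
    (hg1 : g ≠ 1) : (Equiv.mulLeft g).IsCycle := by
  refine ⟨1, by simpa using hg1, fun y _ => ?_⟩
  obtain ⟨i, rfl⟩ := Subgroup.mem_zpowers_iff.mp (hg y)
  exact ⟨i, by simp [zpow_mulLeft]⟩

theorem sign_mulLeft_of_forall_mem_zpowers [Fintype G] [DecidableEq G] {g : G}
    (hg : ∀ x, x ∈ Subgroup.zpowers g) (hg1 : g ≠ 1) :
    sign (Equiv.mulLeft g) = -(-1) ^ Fintype.card G := by
  rw [(isCycle_mulLeft_of_forall_mem_zpowers hg hg1).sign, ← Finset.card_univ]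
  congr
  ext x
  simpa using hg1

theorem exists_sign_mulLeft_eq_neg_one [Fintype G] [DecidableEq G] [IsCyclic G]
    (h : Even (Fintype.card G)) : ∃ g : G, sign (Equiv.mulLeft g) = -1 := by
  obtain ⟨g, hg⟩ := IsCyclic.exists_generator (α := G)
  have hg1 : g ≠ 1 := by
    rintro rfl
    have : Fintype.card G = 1 := Fintype.card_eq_one_iff.mpr ⟨1, fun x => by simpa using hg x⟩
    simp [this] at h
  exact ⟨g, by rw [sign_mulLeft_of_forall_mem_zpowers hg hg1, h.neg_one_pow]⟩

end Equiv.Perm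

namespace Algebra

variable {K L : Type*} [Field K] [Field L] [Algebra K L]

def galoisMatrix (b : Gal(L/K) → L) : Matrix Gal(L/K) Gal(L/K) L :=
  of fun i σ => σ (b i)

variable [FiniteDimensional K L]

theorem map_det_galoisMatrix [DecidableEq Gal(L/K)] (b : Gal(L/K) → L) (σ : Gal(L/K)) :
    σ (galoisMatrix b).det = Perm.sign (Equiv.mulLeft σ) * (galoisMatrix b).det := by
  rw [AlgEquiv.map_det, ← det_permute']
  rfl

variable [IsGalois K L]

theorem traceMatrix_map_eq_galoisMatrix_mul_transpose (b : Gal(L/K) → L) :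
    (traceMatrix K b).map (algebraMap K L) = galoisMatrix b * (galoisMatrix b)ᵀ := by
  ext i j
  simp [galoisMatrix, Matrix.mul_apply, trace_eq_sum_automorphisms]

theorem algebraMap_discr_eq_det_galoisMatrix_sq [DecidableEq Gal(L/K)] (b : Gal(L/K) → L) :
    algebraMap K L (discr K b) = (galoisMatrix b).det ^ 2 := by
  rw [discr_def, RingHom.map_det, RingHom.mapMatrix_apply,
    traceMatrix_map_eq_galoisMatrix_mul_transpose, det_mul, det_transpose, sq]

theorem sign_mulLeft_eq_one_of_isSquare_discr [DecidableEq Gal(L/K)] (hK : ringChar K ≠ 2)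
    {ι : Type*} [Fintype ι] [DecidableEq ι] (b : Module.Basis ι K L)
    (hb : IsSquare (discr K b)) (σ : Gal(L/K)) : Perm.sign (Equiv.mulLeft σ) = 1 := by
  have e : ι ≃ Gal(L/K) := Fintype.equivOfCardEq <| by
    rw [← Module.finrank_eq_card_basis b, ← IsGalois.card_aut_eq_finrank, Nat.card_eq_fintype_card]
  set b' := b.reindex e
  set δ := (galoisMatrix b').det
  obtain ⟨c, hc⟩ : IsSquare (discr K b') := by rwa [b.coe_reindex, discr_reindex]
  have hδ : δ ^ 2 = algebraMap K L c ^ 2 := by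
    rw [← algebraMap_discr_eq_det_galoisMatrix_sq, hc, map_mul, sq]
  have hσδ : σ δ = δ := by
    rcases sq_eq_sq_iff_eq_or_eq_neg.mp hδ with h | h <;> simp [h]
  have hδ0 : δ ≠ 0 := by
    have := (map_ne_zero (algebraMap K L)).mpr (discr_not_zero_of_basis K b')
    rw [algebraMap_discr_eq_det_galoisMatrix_sq] at this
    exact ne_zero_pow two_ne_zero this
  rcases Int.units_eq_one_or (Perm.sign (Equiv.mulLeft σ)) with h | h
  · exact h
  · have h2 : (2 : L) ≠ 0 := by
      rw [← map_ofNat (algebraMap K L)]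
      exact (map_ne_zero _).mpr (Ring.two_ne_zero hK)
    rw [map_det_galoisMatrix, h] at hσδ
    push_cast at hσδ
    exact absurd (by linear_combination -hσδ) (mul_ne_zero h2 hδ0)

end Algebra

theorem det_trace_gram_matrix_nonsquare
    {k K : Type*} [Field k] [Fintype k] [Field K] [Fintype K] [Algebra k K]
    {n : ℕ} (hn : Even n) (hq : Odd (Fintype.card k))
    (hcard : Fintype.card K = Fintype.card k ^ n)
    (b : Module.Basis (Fin n) k K) :
    ¬ IsSquare (Matrix.det
      (Matrix.of fun i j : Fin n => Algebra.trace k K (b i * b j))) := by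
  classical
  have hrank : Module.finrank k K = n :=
    Nat.pow_right_injective Fintype.one_lt_card (Module.card_eq_pow_finrank.symm.trans hcard)
  have hchar : ringChar k ≠ 2 := fun h =>
    Nat.not_even_iff_odd.mpr hq (Nat.even_iff.mpr (FiniteField.even_card_of_char_two h))
  obtain ⟨σ, hσ⟩ := Equiv.Perm.exists_sign_mulLeft_eq_neg_one (G := Gal(K/k)) <| by
    rwa [← Nat.card_eq_fintype_card, IsGalois.card_aut_eq_finrank, hrank]
  intro hsq
  have hσ' := Algebra.sign_mulLeft_eq_one_of_isSquare_discr hchar b hsq σ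
  exact absurd (hσ.symm.trans hσ') (by decide)
end

section
/- Let q be odd, n even, Γ a normal basis of K = F_{q^n} over k = F_q with trace Gram matrix T, S a Singer cycle in the multiplication algebra K ⊂ k^{n×n}, and A the Frobenius permutation matrix. Then for j ∈ {0,…,n-1} and i ∈ {1,…,q^n−1}, the matrix T A^j S^i is symmetric if and only if either j = 0, or j = n/2 and (q^{n/2}+1) divides i. -/
/-!
Write `φ` for the Frobenius automorphism of `K/k`. In the normal basis, `T` is the Gram matrix of
the trace form, `A` the matrix of `φ` and `S` that of multiplication by `σ`, so `T * A ^ j * S ^ i`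
is the Gram matrix of `(u, v) ↦ Tr (u * φ^j (y * v))` with `y = σ ^ i`. As the trace is
`φ`-invariant, the trace-adjoint of `v ↦ φ^j (y * v)` is `v ↦ y * φ^(-j) v`, so by nondegeneracy
of the trace form the matrix is symmetric iff these two maps agree, i.e. iff `y = 0` or
(`φ^j y = y` and `φ^(2j) = 1`). Since `φ` has order `n`, the latter means `j = 0` or `2j = n`, and
for `2j = n` the element `σ^i` is fixed by `φ^j` iff `q^(2j) - 1 = (q^j - 1)(q^j + 1)` divides
`(q^j - 1) i`.
-/

open Matrix

theorem smul_pow_orbit_eq_succ {G α : Type*} [Monoid G] [MulAction G α] {n : ℕ} [NeZero n]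
    {g : G} (hg : orderOf g = n) {v : α} {b : Fin n → α}
    (hb : ∀ i : Fin n, b i = g ^ (i : ℕ) • v) (i : Fin n) : g • b i = b (i + 1) := by
  rw [hb, hb, smul_smul, ← pow_succ', Fin.val_add, Fin.val_one', Nat.add_mod_mod,
    ← pow_mod_orderOf g, hg]

theorem LinearMap.toMatrix_apply_of_apply_basis {R M ι : Type*} [CommSemiring R]
    [AddCommMonoid M] [Module R M] [Fintype ι] [DecidableEq ι] (b : Module.Basis ι R M)
    {f : M →ₗ[R] M} {g : ι → ι} (h : ∀ j, f (b j) = b (g j)) (i j : ι) :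
    LinearMap.toMatrix b b f i j = if i = g j then 1 else 0 := by
  rw [LinearMap.toMatrix_apply, h, b.repr_self, Finsupp.single_apply]
  exact if_congr eq_comm rfl rfl

theorem Nat.dvd_two_mul_iff_of_lt {n j : ℕ} (hj : j < n) :
    n ∣ 2 * j ↔ j = 0 ∨ 2 * j = n := by
  constructor
  · rintro ⟨c, hc⟩
    have hc2 : c < 2 := by nlinarith
    interval_cases c <;> omega
  · rintro (rfl | h)
    · exact dvd_zero n
    · exact h ▸ dvd_rfl

theorem pow_pow_eq_pow_iff_dvd {G : Type*} [Monoid G] {x : G} {Q : ℕ} (hQ : 2 ≤ Q)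
    (hx : orderOf x = Q ^ 2 - 1) (i : ℕ) : (x ^ i) ^ Q = x ^ i ↔ Q + 1 ∣ i := by
  have hQ2 : 4 ≤ Q ^ 2 := by nlinarith
  have hfin : IsOfFinOrder x := orderOf_pos_iff.1 (by omega)
  have hQ1 : ((Q : ℤ) - 1) ≠ 0 := by omega
  rw [← pow_mul, hfin.pow_eq_pow_iff_modEq, hx, Nat.modEq_iff_dvd, Nat.cast_sub (by omega),
    ← Int.natCast_dvd_natCast]
  push_cast
  rw [show (Q : ℤ) ^ 2 - 1 = (Q - 1) * (Q + 1) by ring,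
    show (i : ℤ) - i * Q = -((Q - 1) * i) by ring, dvd_neg, mul_dvd_mul_iff_left hQ1]

section TraceForm

variable {k K : Type*} [Field k] [Field K] [Algebra k K]

theorem Algebra.trace_mul_algEquiv_apply (e : K ≃ₐ[k] K) (y u v : K) :
    Algebra.trace k K (v * e (y * u)) = Algebra.trace k K (u * (y * e.symm v)) := by
  rw [← Algebra.trace_eq_of_algEquiv e.symm, map_mul, AlgEquiv.symm_apply_apply]
  ring_nf

theorem AlgEquiv.forall_apply_mul_eq_mul_symm_iff (e : K ≃ₐ[k] K) (y : K) :
    (∀ v, e (y * v) = y * e.symm v) ↔ y = 0 ∨ (e y = y ∧ e ^ 2 = 1) := by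
  constructor
  · intro h
    refine or_iff_not_imp_left.2 fun hy => ?_
    have hey : e y = y := by simpa using h 1
    have hsymm : ∀ v, e v = e.symm v := fun v => by
      have := h v
      rwa [map_mul, hey, mul_right_inj' hy] at this
    exact ⟨hey, AlgEquiv.ext fun v => by
      rw [pow_two, AlgEquiv.mul_apply, hsymm v, apply_symm_apply, AlgEquiv.one_apply]⟩
  · rintro (rfl | ⟨hey, he⟩) v
    · simp
    · have hsymm : e.symm v = e v := by
        rw [AlgEquiv.symm_apply_eq, ← AlgEquiv.mul_apply, ← pow_two, he, AlgEquiv.one_apply]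
      rw [map_mul, hey, hsymm]

variable [FiniteDimensional k K] [Algebra.IsSeparable k K]

theorem Algebra.eq_of_forall_trace_mul_eq {a c : K}
    (h : ∀ u, Algebra.trace k K (u * a) = Algebra.trace k K (u * c)) : a = c :=
  sub_eq_zero.1 <| (traceForm_nondegenerate k K).2 _ fun u => by
    rw [Algebra.traceForm_apply, mul_sub, map_sub, h, sub_self]

theorem Algebra.isSymm_traceForm_compRight_iff (e : K ≃ₐ[k] K) (y : K) :
    ((Algebra.traceForm k K).compRight (e.toLinearMap * Algebra.lmul k K y)).IsSymm ↔
      y = 0 ∨ (e y = y ∧ e ^ 2 = 1) := by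
  rw [← e.forall_apply_mul_eq_mul_symm_iff, LinearMap.BilinForm.isSymm_def]
  simp only [LinearMap.BilinForm.compRight_apply, Algebra.traceForm_apply, Module.End.mul_apply,
    AlgEquiv.toLinearMap_apply, Algebra.coe_lmul_eq_mul, LinearMap.mul_apply']
  refine ⟨fun h v => Algebra.eq_of_forall_trace_mul_eq (k := k) fun u => ?_, fun h u v => ?_⟩
  · rw [h, Algebra.trace_mul_algEquiv_apply]
  · rw [Algebra.trace_mul_algEquiv_apply, h]

theorem Algebra.isSymm_traceMatrix_mul_toMatrix_mul_leftMulMatrix_iff {ι : Type*} [Fintype ι]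
    [DecidableEq ι] (b : Module.Basis ι k K) (e : K ≃ₐ[k] K) (y : K) :
    (Algebra.traceMatrix k b * LinearMap.toMatrix b b e.toLinearMap *
        Algebra.leftMulMatrix b y).IsSymm ↔ y = 0 ∨ (e y = y ∧ e ^ 2 = 1) := by
  rw [Algebra.traceMatrix_of_basis, mul_assoc, Algebra.leftMulMatrix_apply,
    ← LinearMap.toMatrix_mul, ← LinearMap.BilinForm.toMatrix_compRight,
    LinearMap.BilinForm.isSymm_toMatrix_iff_isSymm,
    Algebra.isSymm_traceForm_compRight_iff]

end TraceForm

namespace FiniteField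

variable {k K : Type*} [Field k] [Fintype k] [Field K] [Algebra k K]

theorem frobeniusAlgEquivOfAlgebraic_pow_apply [Algebra.IsAlgebraic k K] (m : ℕ) (x : K) :
    (frobeniusAlgEquivOfAlgebraic k K ^ m) x = x ^ Fintype.card k ^ m := by
  rw [AlgEquiv.coe_pow, coe_frobeniusAlgEquivOfAlgebraic_iterate]

variable [Finite K]

theorem frobeniusAlgEquivOfAlgebraic_pow_sq_eq_one_iff {j : ℕ} (hj : j < Module.finrank k K) :
    (frobeniusAlgEquivOfAlgebraic k K ^ j) ^ 2 = 1 ↔ j = 0 ∨ 2 * j = Module.finrank k K := by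
  rw [← pow_mul, mul_comm, ← orderOf_dvd_iff_pow_eq_one, orderOf_frobeniusAlgEquivOfAlgebraic,
    Nat.dvd_two_mul_iff_of_lt hj]

theorem toMatrix_frobeniusAlgEquivOfAlgebraic_of_eq_pow {n : ℕ} [NeZero n]
    (b : Module.Basis (Fin n) k K) {γ : K}
    (hb : ∀ i : Fin n, b i = γ ^ Fintype.card k ^ (i : ℕ)) :
    LinearMap.toMatrix b b (frobeniusAlgEquivOfAlgebraic k K).toLinearMap =
      Matrix.of fun i j => if i = j + 1 then 1 else 0 := by
  have hrank : Module.finrank k K = n := by simpa using Module.finrank_eq_card_basis b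
  have hb' : ∀ l : Fin n, frobeniusAlgEquivOfAlgebraic k K (b l) = b (l + 1) :=
    smul_pow_orbit_eq_succ (hrank ▸ orderOf_frobeniusAlgEquivOfAlgebraic k K) fun l => by
      rw [hb, AlgEquiv.smul_def, frobeniusAlgEquivOfAlgebraic_pow_apply]
  ext i j
  exact LinearMap.toMatrix_apply_of_apply_basis b
    (f := (frobeniusAlgEquivOfAlgebraic k K).toLinearMap) hb' i j

end FiniteField

theorem symmetric_T_Aj_Si_iff_general
    {k K : Type*} [Field k] [Fintype k] [Field K] [Fintype K] [Algebra k K]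
    {n : ℕ} [NeZero n] (hn : Even n)
    (γ : K) (b : Module.Basis (Fin n) k K)
    (hb : ∀ i : Fin n, b i = γ ^ (Fintype.card k ^ (i : ℕ)))
    (A : Matrix (Fin n) (Fin n) k)
    (hA : ∀ i j : Fin n, A i j = if i = j + 1 then 1 else 0)
    (σ : K) (hσ : orderOf σ = Fintype.card K - 1)
    (T : Matrix (Fin n) (Fin n) k)
    (hT : T = Matrix.of fun i j : Fin n => Algebra.trace k K (b i * b j))
    (S : Matrix (Fin n) (Fin n) k)
    (hS : S = Algebra.leftMulMatrix b σ) :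
    ∀ j : ℕ, j < n → ∀ i : ℕ, 1 ≤ i → i ≤ Fintype.card k ^ n - 1 →
      ((T * A ^ j * S ^ i)ᵀ = T * A ^ j * S ^ i ↔
        (j = 0 ∨ (j = n / 2 ∧ (Fintype.card k ^ (n / 2) + 1) ∣ i))) := by
  intro j hj i _ _
  have hrank : Module.finrank k K = n := by simpa using Module.finrank_eq_card_basis b
  have hAF :
      A = LinearMap.toMatrix b b (FiniteField.frobeniusAlgEquivOfAlgebraic k K).toLinearMap := by
    rw [FiniteField.toMatrix_frobeniusAlgEquivOfAlgebraic_of_eq_pow b hb]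
    exact Matrix.ext hA
  have hTF : T = Algebra.traceMatrix k b := hT
  have hσi : σ ^ i ≠ 0 :=
    ((orderOf_pos_iff.1 (hσ ▸ Nat.sub_pos_of_lt Fintype.one_lt_card)).isUnit.pow i).ne_zero
  rw [← Matrix.IsSymm, hTF, hAF, hS, LinearMap.toMatrix_pow, ← AlgEquiv.pow_toLinearMap,
    ← map_pow, Algebra.isSymm_traceMatrix_mul_toMatrix_mul_leftMulMatrix_iff, or_iff_right hσi,
    FiniteField.frobeniusAlgEquivOfAlgebraic_pow_sq_eq_one_iff (hrank ▸ hj), hrank,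
    FiniteField.frobeniusAlgEquivOfAlgebraic_pow_apply]
  rcases eq_or_ne j 0 with rfl | hj0
  · simp
  obtain ⟨m, rfl⟩ := hn
  rw [show (m + m) / 2 = m by omega]
  by_cases hjm : j = m
  · subst hjm
    have hq : 2 ≤ Fintype.card k ^ j := Fintype.one_lt_card.trans_le (Nat.le_self_pow hj0 _)
    have hσ' : orderOf σ = (Fintype.card k ^ j) ^ 2 - 1 := by
      rw [hσ, Module.card_fintype b, Fintype.card_fin, ← pow_mul, mul_two]
    simp only [hj0, false_or, two_mul, and_true, true_and]
    exact pow_pow_eq_pow_iff_dvd hq hσ' i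
  · simp [hj0, hjm, show 2 * j ≠ m + m by omega]

theorem symmetric_T_Aj_Si_iff
    {k K : Type*} [Field k] [Fintype k] [Field K] [Fintype K] [Algebra k K]
    {n : ℕ} [NeZero n] (hn : Even n) (hq : Odd (Fintype.card k))
    (hcard : Fintype.card K = Fintype.card k ^ n)
    (γ : K) (b : Module.Basis (Fin n) k K)
    (hb : ∀ i : Fin n, b i = γ ^ (Fintype.card k ^ (i : ℕ)))
    (A : Matrix (Fin n) (Fin n) k)
    (hA : ∀ i j : Fin n, A i j = if i = j + 1 then 1 else 0)
    (σ : K) (hσ : orderOf σ = Fintype.card K - 1)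
    (T : Matrix (Fin n) (Fin n) k)
    (hT : T = Matrix.of fun i j : Fin n => Algebra.trace k K (b i * b j))
    (S : Matrix (Fin n) (Fin n) k)
    (hS : S = Algebra.leftMulMatrix b σ) :
    ∀ j : ℕ, j < n → ∀ i : ℕ, 1 ≤ i → i ≤ Fintype.card k ^ n - 1 →
      ((T * A ^ j * S ^ i)ᵀ = T * A ^ j * S ^ i ↔
        (j = 0 ∨ (j = n / 2 ∧ (Fintype.card k ^ (n / 2) + 1) ∣ i))) :=
  symmetric_T_Aj_Si_iff_general hn γ b hb A hA σ hσ T hT S hS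
end
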